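/- arXiv:1502.03733 — 2 statements merged into one kernel-verified Lean document; each statement's English description precedes it below -/
import Mathlib

section
/- Let a < b be real numbers, let p ≥ 1 be an integer, and let h > 0 be such that (b−a)/h is a positive integer. Then there exists a non-constant function u ∈ H¹(a,b) such that for every spline u_{p,h} ∈ S̃_{p,h}(a,b) one has ‖u − u_{p,h}‖_{L²(a,b)} ≥ (1/(4√3)) · h · |u|_{H¹(a,b)}; i.e., the approximation error estimate in S̃_{p,h}(a,b) is sharp up to a constant. -/
open MeasureTheory Set

/-- The `L²(a,b)` norm of a function. -/
noncomputable def L2 (a b : ℝ) (v : ℝ → ℝ) : ℝ :=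
  Real.sqrt (∫ x in Set.Ioo a b, v x ^ 2)

/-- `u` belongs to the spline space `S_{p,h}(a,b)` of maximum smoothness
(`u` is `(p-1)`-times continuously differentiable on `[a,b]` and coincides with a
polynomial of degree at most `p` on each of the `n = (b-a)/h` subintervals). -/
def IsSplineOn (p n : ℕ) (h a b : ℝ) (u : ℝ → ℝ) : Prop :=
  ContDiffOn ℝ (p - 1 : ℕ) u (Set.Icc a b) ∧
  ∀ j < n, ∃ P : Polynomial ℝ, P.natDegree ≤ p ∧
    ∀ x ∈ Set.Icc (a + j * h) (a + (j + 1) * h), u x = P.eval x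

/-- `u ∈ H¹(a,b)` with weak derivative `g`: `u` is absolutely continuous on `[a,b]`
(an indefinite integral of the locally integrable `g`) and `g` is square-integrable. -/
def IsH1On (a b : ℝ) (u g : ℝ → ℝ) : Prop :=
  IntervalIntegrable g volume a b ∧
  (∀ x ∈ Set.Icc a b, u x = u a + ∫ t in a..x, g t) ∧
  IntegrableOn (fun x => g x ^ 2) (Set.Ioo a b)

/-- The reduced spline space `S̃_{p,h}(a,b)`: splines whose odd derivatives of order
`< p` vanish at both endpoints. -/
def IsReducedSplineOn (p n : ℕ) (h a b : ℝ) (u : ℝ → ℝ) : Prop :=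
  IsSplineOn p n h a b u ∧
  ∀ l : ℕ, 2 * l + 1 < p →
    iteratedDerivWithin (2 * l + 1) u (Set.Icc a b) a = 0 ∧
    iteratedDerivWithin (2 * l + 1) u (Set.Icc a b) b = 0

/-!
Take `u x = cos (ω (x - a))` with `ω = 2π / h`, so that `sin` vanishes and `cos` equals `1` at
every grid node. Integrating a polynomial `P` against `u` over a cell by repeated integration by
parts leaves only the jumps of the odd derivatives `P^(2i+1)` between the two end nodes. For a
reduced spline these jumps telescope over the cells to `s^(2i+1)(b) - s^(2i+1)(a) = 0` when
`2i + 1 < p`, and vanish cellwise when `2i + 1 ≥ p`. Hence `u` is `L²`-orthogonal to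
`S̃_{p,h}(a,b)`, so `‖u - s‖ ≥ ‖u‖ = √((b - a) / 2)`, while `|u|_{H¹} = ω ‖u‖` and
`h ω / (4√3) = 2π / (4√3) ≤ 1`.
-/

open Polynomial Real

namespace Polynomial

theorem iteratedDeriv_eval (P : ℝ[X]) (m : ℕ) :
    iteratedDeriv m (fun x => P.eval x) = fun x => (derivative^[m] P).eval x := by
  induction m with
  | zero => rfl
  | succ m ih =>
    rw [iteratedDeriv_succ, ih]
    ext x
    rw [Function.iterate_succ_apply', Polynomial.deriv]

variable (ω : ℝ) (M : ℕ) (P : ℝ[X])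

/-- With `A = cosAntiderivSinCoeff ω M P` and `B = cosAntiderivCosCoeff ω M P` one has `A' = ω B`
and, when `natDegree P < 2 * M`, `ω A + B' = P`; hence `A(x) sin (ω (x - a)) + B(x) cos (ω (x - a))`
is an antiderivative of `P(x) cos (ω (x - a))`. -/
noncomputable def cosAntiderivSinCoeff : ℝ[X] :=
  ∑ i ∈ Finset.range M, C ((-1) ^ i * ω⁻¹ ^ (2 * i + 1)) * derivative^[2 * i] P

noncomputable def cosAntiderivCosCoeff : ℝ[X] :=
  ∑ i ∈ Finset.range M, C ((-1) ^ i * ω⁻¹ ^ (2 * i + 2)) * derivative^[2 * i + 1] P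

variable {ω M P}

theorem derivative_cosAntiderivSinCoeff (hω : ω ≠ 0) :
    derivative (cosAntiderivSinCoeff ω M P) = C ω * cosAntiderivCosCoeff ω M P := by
  rw [cosAntiderivSinCoeff, cosAntiderivCosCoeff, derivative_sum, Finset.mul_sum]
  refine Finset.sum_congr rfl fun i _ => ?_
  rw [derivative_C_mul, ← Function.iterate_succ_apply' derivative, ← mul_assoc, ← C_mul,
    mul_left_comm, pow_succ' ω⁻¹ (2 * i + 1), mul_inv_cancel_left₀ hω]

theorem C_mul_cosAntiderivSinCoeff_add_derivative (hω : ω ≠ 0)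
    (hM : P.natDegree < 2 * M) :
    C ω * cosAntiderivSinCoeff ω M P + derivative (cosAntiderivCosCoeff ω M P) = P := by
  set T : ℕ → ℝ[X] := fun i => C ((-1) ^ i * ω⁻¹ ^ (2 * i)) * derivative^[2 * i] P
  have hsplit : C ω * cosAntiderivSinCoeff ω M P + derivative (cosAntiderivCosCoeff ω M P)
      = ∑ i ∈ Finset.range M, (T i - T (i + 1)) := by
    rw [cosAntiderivSinCoeff, cosAntiderivCosCoeff, derivative_sum, Finset.mul_sum,
      ← Finset.sum_add_distrib]
    refine Finset.sum_congr rfl fun i _ => ?_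
    rw [derivative_C_mul, ← Function.iterate_succ_apply' derivative, ← mul_assoc, ← C_mul,
      mul_left_comm, pow_succ' ω⁻¹ (2 * i), mul_inv_cancel_left₀ hω, show (2 * i + 1).succ = 2 * (i + 1) by omega,
      sub_eq_add_neg, ← neg_mul, ← C_neg]
    congr 3
    ring
  rw [hsplit, Finset.sum_range_sub']
  simp [T, iterate_derivative_eq_zero hM]

theorem hasDerivAt_cosAntideriv (hω : ω ≠ 0) (hM : P.natDegree < 2 * M) (a x : ℝ) :
    HasDerivAt (fun y => (cosAntiderivSinCoeff ω M P).eval y * sin (ω * (y - a))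
        + (cosAntiderivCosCoeff ω M P).eval y * cos (ω * (y - a)))
      (P.eval x * cos (ω * (x - a))) x := by
  have hlin : HasDerivAt (fun y => ω * (y - a)) ω x := by
    simpa using ((hasDerivAt_id x).sub_const a).const_mul ω
  have hA := (cosAntiderivSinCoeff ω M P).hasDerivAt x
  have hB := (cosAntiderivCosCoeff ω M P).hasDerivAt x
  refine ((hA.mul ((hasDerivAt_sin _).comp x hlin)).add
    (hB.mul ((hasDerivAt_cos _).comp x hlin))).congr_deriv ?_
  have hP := congrArg (eval x) (C_mul_cosAntiderivSinCoeff_add_derivative hω hM)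
  rw [derivative_cosAntiderivSinCoeff hω]
  simp only [eval_add, eval_mul, eval_C, Function.comp_apply] at hP ⊢
  linear_combination cos (ω * (x - a)) * hP

theorem integral_eval_mul_cos_of_cos_eq_one (hω : ω ≠ 0)
    (hM : P.natDegree < 2 * M) {a c d : ℝ} (hc : cos (ω * (c - a)) = 1)
    (hd : cos (ω * (d - a)) = 1) :
    ∫ x in c..d, P.eval x * cos (ω * (x - a)) =
      ∑ i ∈ Finset.range M, (-1) ^ i * ω⁻¹ ^ (2 * i + 2) *
        ((derivative^[2 * i + 1] P).eval d - (derivative^[2 * i + 1] P).eval c) := by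
  have hcont : Continuous fun x => P.eval x * cos (ω * (x - a)) := by fun_prop
  rw [intervalIntegral.integral_eq_sub_of_hasDerivAt
    (fun x _ => hasDerivAt_cosAntideriv hω hM a x) (hcont.intervalIntegrable c d)]
  rw [sin_eq_zero_iff_cos_eq.mpr (Or.inl hc), sin_eq_zero_iff_cos_eq.mpr (Or.inl hd), hc, hd]
  simp only [cosAntiderivCosCoeff, eval_finsetSum, eval_mul, eval_C, mul_zero, mul_one, zero_add,
    mul_sub, Finset.sum_sub_distrib]

end Polynomial

theorem iteratedDerivWithin_eq_eval_of_eqOn {s : ℝ → ℝ} {P : ℝ[X]} {a b c d x : ℝ} {m : ℕ}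
    (hab : a < b) (hcd : c < d) (hsub : Icc c d ⊆ Icc a b) (hs : ContDiffOn ℝ m s (Icc a b))
    (hP : EqOn s (fun x => P.eval x) (Icc c d)) (hx : x ∈ Icc c d) :
    iteratedDerivWithin m s (Icc a b) x = (derivative^[m] P).eval x := by
  have hPsmooth : ContDiffAt ℝ m (fun x => P.eval x) x := by
    simpa only [coe_aeval_eq_eval] using (P.contDiff_aeval (𝕜 := ℝ) m).contDiffAt
  rw [iteratedDerivWithin_eq_iteratedFDerivWithin, ← iteratedFDerivWithin_subset hsub
    (uniqueDiffOn_Icc hcd) (uniqueDiffOn_Icc hab) hs hx,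
    ← iteratedDerivWithin_eq_iteratedFDerivWithin, iteratedDerivWithin_congr hP hx,
    iteratedDerivWithin_eq_iteratedDeriv (uniqueDiffOn_Icc hcd) hPsmooth hx,
    iteratedDeriv_eval]

section ReducedSpline

variable {p n : ℕ} {h a b : ℝ} {s : ℝ → ℝ} {P : ℕ → ℝ[X]}

theorem Icc_cell_subset (hh : 0 < h) (hgrid : b - a = n * h) {j : ℕ} (hj : j < n) :
    Icc (a + j * h) (a + (j + 1) * h) ⊆ Icc a b := by
  have hj' : (j : ℝ) + 1 ≤ n := by exact_mod_cast hj
  apply Icc_subset_Icc <;> nlinarith [(Nat.cast_nonneg j : (0 : ℝ) ≤ j)]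

theorem integral_eq_sum_integral_grid_cells {f : ℝ → ℝ} (hh : 0 < h) (hgrid : b - a = n * h)
    (hf : IntervalIntegrable f volume a b) :
    ∫ x in a..b, f x = ∑ j ∈ Finset.range n, ∫ x in a + j * h..a + (j + 1) * h, f x := by
  have hsplit := intervalIntegral.sum_integral_adjacent_intervals (a := fun j : ℕ => a + j * h)
    (n := n) fun j hj => hf.mono_set <| by
      rw [uIcc_of_le (by push_cast; linarith)]
      exact_mod_cast (Icc_cell_subset hh hgrid hj).trans Icc_subset_uIcc
  simp only [Nat.cast_zero, zero_mul, add_zero, Nat.cast_succ] at hsplit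
  rw [show b = a + n * h by linarith, ← hsplit]

theorem sum_sub_eval_iterate_derivative_eq_zero (hab : a < b) (hh : 0 < h)
    (hgrid : b - a = n * h) (hs : IsReducedSplineOn p n h a b s)
    (hPdeg : ∀ j < n, (P j).natDegree ≤ p)
    (hP : ∀ j < n, ∀ x ∈ Icc (a + j * h) (a + (j + 1) * h), s x = (P j).eval x) (l : ℕ) :
    ∑ j ∈ Finset.range n, ((derivative^[2 * l + 1] (P j)).eval (a + (j + 1) * h)
        - (derivative^[2 * l + 1] (P j)).eval (a + j * h)) = 0 := by
  rcases lt_or_ge (2 * l + 1) p with hlp | hpl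
  · set G : ℕ → ℝ := fun j => iteratedDerivWithin (2 * l + 1) s (Icc a b) (a + j * h)
    have hsmooth : ContDiffOn ℝ (2 * l + 1 : ℕ) s (Icc a b) :=
      hs.1.1.of_le (by exact_mod_cast Nat.le_pred_of_lt hlp)
    have hjump : ∀ j ∈ Finset.range n, (derivative^[2 * l + 1] (P j)).eval (a + (j + 1) * h)
        - (derivative^[2 * l + 1] (P j)).eval (a + j * h) = G (j + 1) - G j := by
      intro j hj
      have hj := Finset.mem_range.mp hj
      have hcd : a + j * h < a + (j + 1) * h := by linarith
      have hderiv := fun x => iteratedDerivWithin_eq_eval_of_eqOn (x := x) hab hcd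
        (Icc_cell_subset hh hgrid hj) hsmooth (hP j hj)
      simp only [G, Nat.cast_succ]
      rw [hderiv _ (right_mem_Icc.mpr hcd.le), hderiv _ (left_mem_Icc.mpr hcd.le)]
    have hb : a + n * h = b := by linarith
    rw [Finset.sum_congr rfl hjump, Finset.sum_range_sub]
    simp only [G, Nat.cast_zero, zero_mul, add_zero, hb, (hs.2 l hlp).1, (hs.2 l hlp).2, sub_zero]
  · refine Finset.sum_eq_zero fun j hj => ?_
    have hconst : (derivative^[2 * l + 1] (P j)).natDegree ≤ 0 := by
      have := natDegree_iterate_derivative (P j) (2 * l + 1)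
      have := hPdeg j (Finset.mem_range.mp hj)
      omega
    rw [eq_C_of_natDegree_le_zero hconst]
    simp

theorem integral_mul_cos_eq_zero_of_isReducedSplineOn (hab : a < b) (hh : 0 < h)
    (hgrid : b - a = n * h) (hs : IsReducedSplineOn p n h a b s) :
    ∫ x in a..b, s x * cos (2 * π / h * (x - a)) = 0 := by
  choose! P hPdeg hP using hs.1.2
  set ω := 2 * π / h with hω
  have hω0 : ω ≠ 0 := by positivity
  have hcos_node : ∀ j : ℕ, cos (ω * (a + j * h - a)) = 1 := fun j => by
    rw [show ω * (a + j * h - a) = j * (2 * π) by rw [hω]; field_simp; ring]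
    exact cos_nat_mul_two_pi j
  have hint : IntervalIntegrable (fun x => s x * cos (ω * (x - a))) volume a b :=
    (hs.1.1.continuousOn.mul (by fun_prop)).intervalIntegrable_of_Icc hab.le
  calc ∫ x in a..b, s x * cos (ω * (x - a))
      = ∑ j ∈ Finset.range n, ∫ x in a + j * h..a + (j + 1) * h,
          (P j).eval x * cos (ω * (x - a)) := by
        rw [integral_eq_sum_integral_grid_cells hh hgrid hint]
        refine Finset.sum_congr rfl fun j hj => intervalIntegral.integral_congr fun x hx => ?_
        rw [uIcc_of_le (by linarith)] at hx
        rw [hP j (Finset.mem_range.mp hj) x hx]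
    _ = ∑ j ∈ Finset.range n, ∑ i ∈ Finset.range (p + 1), (-1) ^ i * ω⁻¹ ^ (2 * i + 2) *
          ((derivative^[2 * i + 1] (P j)).eval (a + (j + 1) * h)
            - (derivative^[2 * i + 1] (P j)).eval (a + j * h)) := by
        refine Finset.sum_congr rfl fun j hj => integral_eval_mul_cos_of_cos_eq_one hω0
          (by have := hPdeg j (Finset.mem_range.mp hj); omega) (hcos_node j) ?_
        exact_mod_cast hcos_node (j + 1)
    _ = 0 := by
        rw [Finset.sum_comm]
        refine Finset.sum_eq_zero fun i _ => ?_
        rw [← Finset.mul_sum, sum_sub_eval_iterate_derivative_eq_zero hab hh hgrid hs hPdeg hP,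
          mul_zero]

end ReducedSpline

theorem L2_eq_sqrt_intervalIntegral {a b : ℝ} (hab : a ≤ b) (v : ℝ → ℝ) :
    L2 a b v = √(∫ x in a..b, v x ^ 2) := by
  rw [L2, intervalIntegral.integral_of_le hab, integral_Ioc_eq_integral_Ioo]

theorem L2_le_L2_sub_of_integral_mul_eq_zero {a b : ℝ} {u s : ℝ → ℝ} (hab : a ≤ b)
    (hu : ContinuousOn u (Icc a b)) (hs : ContinuousOn s (Icc a b))
    (horth : ∫ x in a..b, u x * s x = 0) : L2 a b u ≤ L2 a b (fun x => u x - s x) := by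
  rw [L2_eq_sqrt_intervalIntegral hab, L2_eq_sqrt_intervalIntegral hab]
  refine Real.sqrt_le_sqrt ?_
  have hu2 : IntervalIntegrable (fun x => u x ^ 2) volume a b :=
    (hu.pow 2).intervalIntegrable_of_Icc hab
  have hs2 : IntervalIntegrable (fun x => s x ^ 2) volume a b :=
    (hs.pow 2).intervalIntegrable_of_Icc hab
  have hus : IntervalIntegrable (fun x => 2 * (u x * s x)) volume a b :=
    ((hu.mul hs).intervalIntegrable_of_Icc hab).const_mul 2
  have hexpand : ∫ x in a..b, (u x - s x) ^ 2 =
      (∫ x in a..b, u x ^ 2) - 2 * (∫ x in a..b, u x * s x) + ∫ x in a..b, s x ^ 2 := by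
    simp_rw [sub_sq, mul_assoc]
    rw [intervalIntegral.integral_add (hu2.sub hus) hs2, intervalIntegral.integral_sub hu2 hus,
      intervalIntegral.integral_const_mul]
  rw [hexpand, horth]
  linarith [intervalIntegral.integral_nonneg (μ := volume) hab fun x _ => sq_nonneg (s x)]

theorem integral_cos_mul_sub_sq {a b ω : ℝ} (hω : ω ≠ 0) (hper : cos (ω * (b - a)) = 1) :
    ∫ x in a..b, cos (ω * (x - a)) ^ 2 = (b - a) / 2 := by
  replace hper := sin_eq_zero_iff_cos_eq.mpr (Or.inl hper)
  simp_rw [mul_sub]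
  rw [intervalIntegral.integral_comp_mul_sub (fun t => cos t ^ 2) hω, integral_cos_sq]
  rw [mul_sub] at hper
  simp only [hper, sub_self, sin_zero, smul_eq_mul]
  field_simp
  ring

theorem integral_sin_mul_sub_sq {a b ω : ℝ} (hω : ω ≠ 0) (hper : cos (ω * (b - a)) = 1) :
    ∫ x in a..b, sin (ω * (x - a)) ^ 2 = (b - a) / 2 := by
  replace hper := sin_eq_zero_iff_cos_eq.mpr (Or.inl hper)
  simp_rw [mul_sub]
  rw [intervalIntegral.integral_comp_mul_sub (fun t => sin t ^ 2) hω, integral_sin_sq]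
  rw [mul_sub] at hper
  simp only [hper, sub_self, sin_zero, smul_eq_mul]
  field_simp
  ring

theorem isH1On_cos_mul_sub (a b ω : ℝ) :
    IsH1On a b (fun x => cos (ω * (x - a))) (fun x => -ω * sin (ω * (x - a))) := by
  have hg : Continuous fun x => -ω * sin (ω * (x - a)) := by fun_prop
  refine ⟨hg.intervalIntegrable a b, fun x _ => ?_,
    ((hg.pow 2).integrableOn_Icc).mono_set Ioo_subset_Icc_self⟩
  have hderiv : ∀ y, HasDerivAt (fun x => cos (ω * (x - a))) (-ω * sin (ω * (y - a))) y :=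
    fun y => (((hasDerivAt_id y).sub_const a).const_mul ω).cos.congr_deriv (by simp; ring)
  rw [intervalIntegral.integral_eq_sub_of_hasDerivAt (fun y _ => hderiv y)
    (hg.intervalIntegrable a x)]
  simp

theorem L2_cos_mul_sub {a b ω : ℝ} (hab : a ≤ b) (hω : ω ≠ 0) (hper : cos (ω * (b - a)) = 1) :
    L2 a b (fun x => cos (ω * (x - a))) = √((b - a) / 2) := by
  rw [L2_eq_sqrt_intervalIntegral hab, integral_cos_mul_sub_sq hω hper]

theorem L2_neg_mul_sin_mul_sub {a b ω : ℝ} (hab : a ≤ b) (hω : 0 < ω)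
    (hper : cos (ω * (b - a)) = 1) :
    L2 a b (fun x => -ω * sin (ω * (x - a))) = ω * √((b - a) / 2) := by
  simp_rw [L2_eq_sqrt_intervalIntegral hab, mul_pow, neg_sq, intervalIntegral.integral_const_mul,
    integral_sin_mul_sub_sq hω.ne' hper, Real.sqrt_mul (sq_nonneg ω), Real.sqrt_sq hω.le]

theorem not_exists_forall_cos_mul_sub_eq {a b ω : ℝ} (hω : 0 < ω) (hπ : π ≤ ω * (b - a)) :
    ¬ ∃ c, ∀ x ∈ Icc a b, cos (ω * (x - a)) = c := by
  rintro ⟨c, hc⟩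
  have hmid : a + π / ω ∈ Icc a b :=
    ⟨by linarith [div_pos pi_pos hω], by linarith [(div_le_iff₀' hω).mpr hπ]⟩
  have hcos := (hc a (left_mem_Icc.2 (by linarith [hmid.1, hmid.2]))).trans (hc _ hmid).symm
  rw [sub_self, mul_zero, cos_zero, add_sub_cancel_left, mul_div_cancel₀ _ hω.ne', cos_pi] at hcos
  norm_num at hcos

theorem two_pi_le_four_mul_sqrt_three : 2 * π ≤ 4 * √3 := by
  nlinarith [pi_lt_d2, (Real.le_sqrt (by norm_num) (by norm_num)).mpr
    (by norm_num : (1.7 : ℝ) ^ 2 ≤ 3)]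

theorem approximation_estimate_sharp_general (a b h : ℝ) (p n : ℕ)
    (hab : a < b) (hh : 0 < h) (hn : 0 < n) (hgrid : b - a = n * h) :
    ∃ u g : ℝ → ℝ, IsH1On a b u g ∧
      (¬ ∃ c : ℝ, ∀ x ∈ Set.Icc a b, u x = c) ∧
      ∀ s : ℝ → ℝ, IsReducedSplineOn p n h a b s →
        (1 / (4 * Real.sqrt 3)) * h * L2 a b g ≤ L2 a b (fun x => u x - s x) := by
  set ω := 2 * π / h with hω
  have hωpos : 0 < ω := by positivity
  have hωL : ω * (b - a) = n * (2 * π) := by rw [hgrid, hω]; field_simp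
  have hper : cos (ω * (b - a)) = 1 := hωL ▸ cos_nat_mul_two_pi n
  refine ⟨fun x => cos (ω * (x - a)), fun x => -ω * sin (ω * (x - a)),
    isH1On_cos_mul_sub a b ω, not_exists_forall_cos_mul_sub_eq hωpos ?_, fun s hs => ?_⟩
  · have : (1 : ℝ) ≤ n := by exact_mod_cast hn
    nlinarith [pi_pos]
  have horth : ∫ x in a..b, cos (ω * (x - a)) * s x = 0 := by
    simp_rw [mul_comm (cos _)]
    exact integral_mul_cos_eq_zero_of_isReducedSplineOn hab hh hgrid hs
  calc 1 / (4 * √3) * h * L2 a b (fun x => -ω * sin (ω * (x - a)))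
      = 2 * π / (4 * √3) * √((b - a) / 2) := by
        rw [L2_neg_mul_sin_mul_sub hab.le hωpos hper, hω]
        field_simp
    _ ≤ √((b - a) / 2) := mul_le_of_le_one_left (Real.sqrt_nonneg _)
        (div_le_one_of_le₀ two_pi_le_four_mul_sqrt_three (by positivity))
    _ = L2 a b (fun x => cos (ω * (x - a))) := (L2_cos_mul_sub hab.le hωpos.ne' hper).symm
    _ ≤ L2 a b (fun x => cos (ω * (x - a)) - s x) :=
        L2_le_L2_sub_of_integral_mul_eq_zero hab.le (by fun_prop) hs.1.1.continuousOn horth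

/-- Corollary 2 of the paper: the approximation error estimate in
the reduced spline space is sharp up to a constant. -/
theorem approximation_estimate_sharp (a b h : ℝ) (p n : ℕ)
    (hab : a < b) (hp : 1 ≤ p) (hh : 0 < h) (hn : 0 < n) (hgrid : b - a = n * h) :
    ∃ u g : ℝ → ℝ, IsH1On a b u g ∧
      (¬ ∃ c : ℝ, ∀ x ∈ Set.Icc a b, u x = c) ∧
      ∀ s : ℝ → ℝ, IsReducedSplineOn p n h a b s →
        (1 / (4 * Real.sqrt 3)) * h * L2 a b g ≤ L2 a b (fun x => u x - s x) :=
  approximation_estimate_sharp_general a b h p n hab hh hn hgrid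
end

section
/- Let a < b be real numbers, let p ≥ 1 and q ≥ 1 be integers with q ≤ p+1, and let h > 0 be such that (b−a)/h is a positive integer. Then every spline u ∈ S̃^{(q)}_{p,h}(a,b) satisfies |u|_{H^q(a,b)} ≤ 2√3 · h^{−1} · |u|_{H^{q−1}(a,b)}. -/
open MeasureTheory Set

/-- The reduced spline space `S̃^{(q)}_{p,h}(a,b)`: splines whose derivatives of order
`2l+q < p` vanish at both endpoints. -/
def IsReducedSplineQOn (q p n : ℕ) (h a b : ℝ) (u : ℝ → ℝ) : Prop :=
  IsSplineOn p n h a b u ∧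
  ∀ l : ℕ, 2 * l + q < p →
    iteratedDerivWithin (2 * l + q) u (Set.Icc a b) a = 0 ∧
    iteratedDerivWithin (2 * l + q) u (Set.Icc a b) b = 0

/-! On each cell of the grid `u` is a polynomial, so `|u|²_{H^r}` is a sum of cell integrals.
For `q ≤ r < p`, integrating `(u^(r))²` by parts on every cell, the interface terms telescope
away by the `C^(p-1)` continuity of `u`, and the boundary terms `u^(r-1) u^(r)` vanish because one
of the two orders has the parity of `q`; Cauchy–Schwarz then gives
`|u|²_{H^r} ≤ |u|_{H^(r-1)} |u|_{H^(r+1)}`. At the top order `u^(p-1)` is linear on each cell,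
where `∫ L'² ≤ 12 h⁻² ∫ L²`, and log-convexity carries this ratio bound down to `r = q`. -/

open Polynomial intervalIntegral Finset Filter Topology

theorem sq_integral_mul_le_integral_sq_mul_integral_sq {α : Type*} [MeasurableSpace α]
    {μ : Measure α} {f g : α → ℝ} (hf : Integrable (fun x => f x ^ 2) μ)
    (hg : Integrable (fun x => g x ^ 2) μ) (hfg : Integrable (fun x => f x * g x) μ) :
    (∫ x, f x * g x ∂μ) ^ 2 ≤ (∫ x, f x ^ 2 ∂μ) * ∫ x, g x ^ 2 ∂μ := by
  have hquad : ∀ r : ℝ,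
      0 ≤ (∫ x, g x ^ 2 ∂μ) * (r * r) + (2 * ∫ x, f x * g x ∂μ) * r + ∫ x, f x ^ 2 ∂μ := by
    intro r
    calc (0 : ℝ) ≤ ∫ x, (f x + r * g x) ^ 2 ∂μ := integral_nonneg fun x => sq_nonneg _
      _ = ∫ x, ((r * r) * g x ^ 2 + (2 * r) * (f x * g x) + f x ^ 2) ∂μ := by
        congr 1; ext x; ring
      _ = _ := by
        have hgfg : Integrable (fun x => r * r * g x ^ 2 + 2 * r * (f x * g x)) μ :=
          (hg.const_mul _).add (hfg.const_mul _)
        rw [integral_add hgfg hf, integral_add (hg.const_mul _) (hfg.const_mul _),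
          MeasureTheory.integral_const_mul, MeasureTheory.integral_const_mul]
        ring
  have hdiscr := discrim_le_zero hquad
  rw [discrim] at hdiscr
  linarith

theorem sq_intervalIntegral_mul_le_integral_sq_mul_integral_sq {f g : ℝ → ℝ}
    (hf : Continuous f) (hg : Continuous g) (s t : ℝ) :
    (∫ x in s..t, f x * g x) ^ 2 ≤ (∫ x in s..t, f x ^ 2) * ∫ x in s..t, g x ^ 2 := by
  wlog hst : s ≤ t generalizing s t
  · simpa only [integral_symm t s, neg_sq, neg_mul_neg] using this t s (le_of_not_ge hst)
  simp only [integral_of_le hst]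
  exact sq_integral_mul_le_integral_sq_mul_integral_sq (hf.pow 2).integrableOn_Ioc
    (hg.pow 2).integrableOn_Ioc (hf.mul hg).integrableOn_Ioc

theorem Finset.sum_range_sub_eq_of_eq_succ {G : Type*} [AddCommGroup G] {L R : ℕ → G} {n : ℕ}
    (hn : 0 < n) (h : ∀ j, j + 1 < n → R j = L (j + 1)) :
    ∑ j ∈ range n, (R j - L j) = R (n - 1) - L 0 := by
  induction n with
  | zero => omega
  | succ m ih =>
    rcases m.eq_zero_or_pos with rfl | hm
    · simp
    rw [sum_range_succ, ih hm fun j hj => h j (by omega), h (m - 1) (by omega),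
      Nat.sub_add_cancel hm, Nat.add_sub_cancel]
    abel

theorem integral_eq_sum_of_eqOn_Ioo {f : ℝ → ℝ} {F : ℕ → ℝ → ℝ} {x : ℕ → ℝ} {n : ℕ}
    (hx : Monotone x) (hF : ∀ j < n, IntervalIntegrable (F j) volume (x j) (x (j + 1)))
    (hf : ∀ j < n, EqOn f (F j) (Ioo (x j) (x (j + 1)))) :
    ∫ t in Ioo (x 0) (x n), f t = ∑ j ∈ range n, ∫ t in x j..x (j + 1), F j t := by
  have hint : ∀ j < n, IntervalIntegrable f volume (x j) (x (j + 1)) := by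
    intro j hj
    have hFj := hF j hj
    rw [intervalIntegrable_iff_integrableOn_Ioo_of_le (hx j.le_succ)] at hFj ⊢
    exact hFj.congr_fun (hf j hj).symm measurableSet_Ioo
  rw [← integral_Ioc_eq_integral_Ioo, ← integral_of_le (hx (Nat.zero_le n)),
    ← sum_integral_adjacent_intervals hint]
  refine sum_congr rfl fun j hj => ?_
  rw [integral_of_le (hx j.le_succ), integral_of_le (hx j.le_succ), integral_Ioc_eq_integral_Ioo,
    integral_Ioc_eq_integral_Ioo]
  exact setIntegral_congr_fun measurableSet_Ioo (hf j (mem_range.1 hj))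

theorem succ_le_mul_of_logConvex {A : ℕ → ℝ} {c : ℝ} {q p : ℕ} (hA : ∀ k, 0 ≤ A k)
    (hc : 0 ≤ c) (hconv : ∀ r, q ≤ r → r < p → A (r + 1) ^ 2 ≤ A r * A (r + 2))
    (htop : A (p + 1) ≤ c * A p) {r : ℕ} (hqr : q ≤ r) (hrp : r ≤ p) :
    A (r + 1) ≤ c * A r := by
  induction hrp using Nat.decreasingInduction with
  | self => exact htop
  | of_succ k hkp ih =>
    rcases (hA (k + 1)).eq_or_lt with hzero | hpos
    · rw [← hzero]
      exact mul_nonneg hc (hA k)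
    refine le_of_mul_le_mul_right ?_ hpos
    calc A (k + 1) * A (k + 1) = A (k + 1) ^ 2 := (sq _).symm
      _ ≤ A k * A (k + 2) := hconv k hqr hkp
      _ ≤ A k * (c * A (k + 1)) := mul_le_mul_of_nonneg_left (ih (by omega)) (hA k)
      _ = c * A k * A (k + 1) := by ring

theorem Polynomial.iteratedDeriv_eval_s14 (P : ℝ[X]) (k : ℕ) :
    iteratedDeriv k (fun x => P.eval x) = fun x => (derivative^[k] P).eval x := by
  induction k with
  | zero => simp
  | succ k ih =>
    ext x
    rw [iteratedDeriv_succ, ih, Function.iterate_succ_apply']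
    exact Polynomial.deriv _

theorem Polynomial.integral_sq_derivative_eval (Q : ℝ[X]) (s t : ℝ) :
    ∫ x in s..t, (derivative Q).eval x ^ 2
      = Q.eval t * (derivative Q).eval t - Q.eval s * (derivative Q).eval s
        - ∫ x in s..t, Q.eval x * (derivative (derivative Q)).eval x := by
  have hFTC : ∫ x in s..t, (derivative (Q * derivative Q)).eval x
      = (Q * derivative Q).eval t - (Q * derivative Q).eval s :=
    integral_eq_sub_of_hasDerivAt (fun x _ => (Q * derivative Q).hasDerivAt x)
      ((Polynomial.continuous _).intervalIntegrable _ _)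
  simp only [derivative_mul, eval_add, eval_mul] at hFTC
  rw [integral_add (Continuous.intervalIntegrable (by fun_prop) _ _)
    (Continuous.intervalIntegrable (by fun_prop) _ _)] at hFTC
  simp only [sq]
  linarith

/-- For linear `L`, `∫ L² = h L(m)² + h³ L'² / 12` over a cell of length `h` with midpoint `m`. -/
theorem Polynomial.integral_sq_derivative_le_of_natDegree_le_one {L : ℝ[X]}
    (hL : L.natDegree ≤ 1) (s : ℝ) {h : ℝ} (hh : 0 < h) :
    ∫ x in s..s + h, (derivative L).eval x ^ 2 ≤ 12 / h ^ 2 * ∫ x in s..s + h, L.eval x ^ 2 := by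
  obtain ⟨c₁, c₀, rfl⟩ : ∃ c₁ c₀, L = C c₁ * X + C c₀ :=
    ⟨_, _, eq_X_add_C_of_natDegree_le_one hL⟩
  have hL' : ∫ x in s..s + h, (derivative (C c₁ * X + C c₀)).eval x ^ 2 = c₁ ^ 2 * h := by
    simp
    ring
  have hL2 : ∫ x in s..s + h, (C c₁ * X + C c₀).eval x ^ 2
      = (c₀ ^ 2 * (s + h) + c₀ * c₁ * (s + h) ^ 2 + c₁ ^ 2 * (s + h) ^ 3 / 3)
        - (c₀ ^ 2 * s + c₀ * c₁ * s ^ 2 + c₁ ^ 2 * s ^ 3 / 3) := by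
    apply integral_eq_sub_of_hasDerivAt
      (f := fun x => c₀ ^ 2 * x + c₀ * c₁ * x ^ 2 + c₁ ^ 2 * x ^ 3 / 3)
    · intro x _
      convert ((((hasDerivAt_id x).const_mul (c₀ ^ 2)).add
        ((hasDerivAt_pow 2 x).const_mul (c₀ * c₁))).add
        (((hasDerivAt_pow 3 x).const_mul (c₁ ^ 2)).div_const 3)) using 1
      · ext y
        simp only [Pi.add_apply, id]
      · simp
        ring
    · exact Continuous.intervalIntegrable (by fun_prop) _ _
  rw [hL', hL2, div_mul_eq_mul_div, le_div_iff₀ (by positivity)]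
  nlinarith [mul_nonneg (mul_nonneg hh.le hh.le) (sq_nonneg (2 * c₀ + c₁ * (2 * s + h)))]

theorem Polynomial.eval_iterate_derivative_mul_succ_eq_zero {Q : ℝ[X]} {z : ℝ} {p q r : ℕ}
    (hQ : ∀ l, 2 * l + q < p → (derivative^[2 * l + q] Q).eval z = 0)
    (hqr : q ≤ r + 1) (hrp : r + 1 < p) :
    (derivative^[r] Q).eval z * (derivative^[r + 1] Q).eval z = 0 := by
  rcases Nat.even_or_odd (r + 1 - q) with ⟨l, hl⟩ | ⟨l, hl⟩
  · have hr : r + 1 = 2 * l + q := by omega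
    rw [hr, hQ l (by omega), mul_zero]
  · have hr : r = 2 * l + q := by omega
    rw [hr, hQ l (by omega), zero_mul]

/-- The squared broken `H^r` seminorm of the piecewise polynomial that equals `P j` on the cell
`[x j, x (j + 1)]` for `j < n`. -/
noncomputable def brokenSeminormSq (P : ℕ → ℝ[X]) (x : ℕ → ℝ) (n r : ℕ) : ℝ :=
  ∑ j ∈ range n, ∫ t in x j..x (j + 1), (derivative^[r] (P j)).eval t ^ 2

namespace brokenSeminormSq

variable {P : ℕ → ℝ[X]} {x : ℕ → ℝ} {n : ℕ}

theorem nonneg (hx : Monotone x) (r : ℕ) : 0 ≤ brokenSeminormSq P x n r :=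
  sum_nonneg fun j _ => integral_nonneg (hx j.le_succ) fun _ _ => sq_nonneg _

theorem eq_zero_of_natDegree_lt {r : ℕ} (hdeg : ∀ j, (P j).natDegree < r) :
    brokenSeminormSq P x n r = 0 := by
  simp [brokenSeminormSq, iterate_derivative_eq_zero (hdeg _)]

theorem succ_le_of_natDegree_le {h : ℝ} (hh : 0 < h) (hx : ∀ j, x (j + 1) = x j + h) {r : ℕ}
    (hdeg : ∀ j, (P j).natDegree ≤ r + 1) :
    brokenSeminormSq P x n (r + 1) ≤ 12 / h ^ 2 * brokenSeminormSq P x n r := by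
  rw [brokenSeminormSq, brokenSeminormSq, mul_sum]
  refine sum_le_sum fun j _ => ?_
  have hlin : (derivative^[r] (P j)).natDegree ≤ 1 := by
    have := natDegree_iterate_derivative (P j) r
    have := hdeg j
    omega
  rw [hx, Function.iterate_succ_apply']
  exact integral_sq_derivative_le_of_natDegree_le_one hlin (x j) hh

theorem succ_eq_neg_sum (hn : 0 < n) {r : ℕ}
    (hiface : ∀ j, j + 1 < n → ∀ k ≤ r + 1,
      (derivative^[k] (P j)).eval (x (j + 1)) = (derivative^[k] (P (j + 1))).eval (x (j + 1)))
    (hleft : (derivative^[r] (P 0)).eval (x 0) * (derivative^[r + 1] (P 0)).eval (x 0) = 0)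
    (hright : (derivative^[r] (P (n - 1))).eval (x n) *
      (derivative^[r + 1] (P (n - 1))).eval (x n) = 0) :
    brokenSeminormSq P x n (r + 1) = -∑ j ∈ range n, ∫ t in x j..x (j + 1),
      (derivative^[r] (P j)).eval t * (derivative^[r + 2] (P j)).eval t := by
  set flux : ℕ → ℝ → ℝ := fun j z =>
    (derivative^[r] (P j)).eval z * (derivative^[r + 1] (P j)).eval z with hflux
  have hcell : ∀ j, ∫ t in x j..x (j + 1), (derivative^[r + 1] (P j)).eval t ^ 2
      = (flux j (x (j + 1)) - flux j (x j)) - ∫ t in x j..x (j + 1),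
        (derivative^[r] (P j)).eval t * (derivative^[r + 2] (P j)).eval t := by
    intro j
    simp only [hflux, Function.iterate_succ_apply']
    exact integral_sq_derivative_eval _ _ _
  have htelescope := Finset.sum_range_sub_eq_of_eq_succ (R := fun j => flux j (x (j + 1)))
    (L := fun j => flux j (x j)) hn fun j hj => by
      simp only [hflux, hiface j hj r (by omega), hiface j hj (r + 1) le_rfl]
  rw [brokenSeminormSq, sum_congr rfl fun j _ => hcell j, sum_sub_distrib, htelescope,
    Nat.sub_add_cancel hn]
  simp only [hflux, hleft, hright]
  ring

theorem sq_succ_le_mul (hx : Monotone x) (hn : 0 < n) {r : ℕ}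
    (hiface : ∀ j, j + 1 < n → ∀ k ≤ r + 1,
      (derivative^[k] (P j)).eval (x (j + 1)) = (derivative^[k] (P (j + 1))).eval (x (j + 1)))
    (hleft : (derivative^[r] (P 0)).eval (x 0) * (derivative^[r + 1] (P 0)).eval (x 0) = 0)
    (hright : (derivative^[r] (P (n - 1))).eval (x n) *
      (derivative^[r + 1] (P (n - 1))).eval (x n) = 0) :
    brokenSeminormSq P x n (r + 1) ^ 2
      ≤ brokenSeminormSq P x n r * brokenSeminormSq P x n (r + 2) := by
  rw [succ_eq_neg_sum hn hiface hleft hright, neg_sq]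
  exact sum_sq_le_sum_mul_sum_of_sq_le_mul _
    (fun j _ => integral_nonneg (hx j.le_succ) fun _ _ => sq_nonneg _)
    (fun j _ => integral_nonneg (hx j.le_succ) fun _ _ => sq_nonneg _)
    fun j _ => sq_intervalIntegral_mul_le_integral_sq_mul_integral_sq
      (Polynomial.continuous _) (Polynomial.continuous _) _ _

theorem inverse_estimate (hn : 0 < n) {h : ℝ} (hh : 0 < h) (hx : ∀ j, x (j + 1) = x j + h)
    {p q : ℕ} (hq : 1 ≤ q) (hqp : q ≤ p + 1) (hdeg : ∀ j, (P j).natDegree ≤ p)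
    (hiface : ∀ j, j + 1 < n → ∀ k < p,
      (derivative^[k] (P j)).eval (x (j + 1)) = (derivative^[k] (P (j + 1))).eval (x (j + 1)))
    (hleft : ∀ l, 2 * l + q < p → (derivative^[2 * l + q] (P 0)).eval (x 0) = 0)
    (hright : ∀ l, 2 * l + q < p → (derivative^[2 * l + q] (P (n - 1))).eval (x n) = 0) :
    brokenSeminormSq P x n q ≤ 12 / h ^ 2 * brokenSeminormSq P x n (q - 1) := by
  have hmono : Monotone x := monotone_nat_of_le_succ fun j => by rw [hx]; linarith
  rcases hqp.lt_or_eq with hqp | rfl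
  · obtain ⟨q, rfl⟩ : ∃ q', q = q' + 1 := ⟨q - 1, by omega⟩
    obtain ⟨p, rfl⟩ : ∃ p', p = p' + 1 := ⟨p - 1, by omega⟩
    refine succ_le_mul_of_logConvex (nonneg hmono) (by positivity) (fun r hqr hrp => ?_)
      (succ_le_of_natDegree_le hh hx hdeg) le_rfl (by omega)
    exact sq_succ_le_mul hmono hn (fun j hj k hk => hiface j hj k (by omega))
      (eval_iterate_derivative_mul_succ_eq_zero hleft (by omega) (by omega))
      (eval_iterate_derivative_mul_succ_eq_zero hright (by omega) (by omega))
  · rw [eq_zero_of_natDegree_lt fun j => Nat.lt_succ_of_le (hdeg j)]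
    exact mul_nonneg (by positivity) (nonneg hmono _)

end brokenSeminormSq

theorem iteratedDeriv_eq_eval_of_eqOn {u : ℝ → ℝ} {P : ℝ[X]} {S : Set ℝ} {z : ℝ}
    (hP : EqOn u (fun x => P.eval x) S) (hS : S ∈ 𝓝 z) (k : ℕ) :
    iteratedDeriv k u z = (derivative^[k] P).eval z := by
  rw [(eventuallyEq_of_mem hS hP).iteratedDeriv_eq, P.iteratedDeriv_eval_s14]

theorem iteratedDerivWithin_eqOn_eval_of_eqOn {u : ℝ → ℝ} {P : ℝ[X]} {a b s t : ℝ} {m k : ℕ}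
    (hu : ContDiffOn ℝ m u (Icc a b)) (hk : k ≤ m) (hst : s < t) (hsub : Icc s t ⊆ Icc a b)
    (hP : EqOn u (fun x => P.eval x) (Icc s t)) :
    EqOn (iteratedDerivWithin k u (Icc a b)) (fun x => (derivative^[k] P).eval x) (Icc s t) := by
  have hab : a < b :=
    (hsub (left_mem_Icc.2 hst.le)).1.trans_lt (hst.trans_le (hsub (right_mem_Icc.2 hst.le)).2)
  refine EqOn.of_subset_closure (s := Ioo s t) (fun z hz => ?_)
    ((hu.continuousOn_iteratedDerivWithin (by exact_mod_cast hk) (uniqueDiffOn_Icc hab)).mono hsub)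
    (Polynomial.continuous _).continuousOn Ioo_subset_Icc_self (closure_Ioo hst.ne).ge
  have hS : Icc s t ∈ 𝓝 z := Icc_mem_nhds hz.1 hz.2
  have hsmooth : ContDiffAt ℝ k u z :=
    (show ContDiffAt ℝ k (fun x => P.eval x) z by
      simpa using (P.contDiff_aeval (𝕜 := ℝ) k).contDiffAt).congr_of_eventuallyEq
      (eventuallyEq_of_mem hS hP)
  rw [iteratedDerivWithin_eq_iteratedDeriv (uniqueDiffOn_Icc hab) hsmooth
    (hsub (Ioo_subset_Icc_self hz)), iteratedDeriv_eq_eval_of_eqOn hP hS]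

theorem IsSplineOn.exists_polynomial_pieces {p n : ℕ} {h a b : ℝ} {u : ℝ → ℝ}
    (hu : IsSplineOn p n h a b u) :
    ∃ P : ℕ → ℝ[X], (∀ j, (P j).natDegree ≤ p) ∧
      ∀ j < n, EqOn u (fun x => (P j).eval x) (Icc (a + j * h) (a + (j + 1) * h)) := by
  have hpieces : ∀ j, ∃ P : ℝ[X], P.natDegree ≤ p ∧
      (j < n → EqOn u (fun x => P.eval x) (Icc (a + j * h) (a + (j + 1) * h))) := by
    intro j
    by_cases hj : j < n
    · obtain ⟨P, hdeg, hP⟩ := hu.2 j hj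
      exact ⟨P, hdeg, fun _ => hP⟩
    · exact ⟨0, by simp, fun h => absurd h hj⟩
  choose P hdeg hP using hpieces
  exact ⟨P, hdeg, hP⟩

theorem L2_iteratedDeriv_eq_sqrt_brokenSeminormSq {u : ℝ → ℝ} {P : ℕ → ℝ[X]} {x : ℕ → ℝ}
    {n : ℕ} (hx : Monotone x) (hP : ∀ j < n, EqOn u (fun t => (P j).eval t) (Icc (x j) (x (j + 1))))
    (k : ℕ) : L2 (x 0) (x n) (iteratedDeriv k u) = √(brokenSeminormSq P x n k) := by
  rw [L2, brokenSeminormSq,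
    integral_eq_sum_of_eqOn_Ioo (F := fun j t => (derivative^[k] (P j)).eval t ^ 2) hx
      (fun j _ => Continuous.intervalIntegrable (by fun_prop) _ _)
      fun j hj z hz => by
        simp only [iteratedDeriv_eq_eval_of_eqOn (hP j hj) (Icc_mem_nhds hz.1 hz.2)]]

theorem higher_sobolev_inverse_inequality_general (a b h : ℝ) (p q n : ℕ)
    (hq : 1 ≤ q) (hqp : q ≤ p + 1)
    (hh : 0 < h) (hn : 0 < n) (hgrid : b - a = n * h)
    (u : ℝ → ℝ) (hu : IsReducedSplineQOn q p n h a b u) :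
    L2 a b (iteratedDeriv q u) ≤ 2 * Real.sqrt 3 * h⁻¹ * L2 a b (iteratedDeriv (q - 1) u) := by
  obtain ⟨hspline, hbc⟩ := hu
  obtain ⟨P, hdeg, hP⟩ := hspline.exists_polynomial_pieces
  set x : ℕ → ℝ := fun j => a + j * h with hxdef
  have hx : ∀ j, x (j + 1) = x j + h := fun j => by simp only [hxdef]; push_cast; ring
  have hmono : Monotone x := monotone_nat_of_le_succ fun j => by rw [hx]; linarith
  have hx0 : x 0 = a := by simp [hxdef]
  have hxn : x n = b := by simp only [hxdef]; linarith
  have hcell : ∀ j < n, EqOn u (fun t => (P j).eval t) (Icc (x j) (x (j + 1))) := fun j hj => by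
    simpa [hxdef] using hP j hj
  have hderiv : ∀ j < n, ∀ k < p, EqOn (iteratedDerivWithin k u (Icc a b))
      (fun t => (derivative^[k] (P j)).eval t) (Icc (x j) (x (j + 1))) := fun j hj k hk =>
    iteratedDerivWithin_eqOn_eval_of_eqOn hspline.1 (by omega) (by rw [hx]; linarith)
      (hx0 ▸ hxn ▸ Icc_subset_Icc (hmono (Nat.zero_le j)) (hmono hj)) (hcell j hj)
  have hestimate := brokenSeminormSq.inverse_estimate hn hh hx hq hqp hdeg
    (fun j hj k hk => (hderiv j (by omega) k hk ⟨hmono j.le_succ, le_rfl⟩).symm.trans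
      (hderiv (j + 1) hj k hk ⟨le_rfl, hmono (j + 1).le_succ⟩))
    (fun l hl => (hderiv 0 hn _ hl ⟨le_rfl, hmono (Nat.zero_le 1)⟩).symm.trans
      (by rw [hx0]; exact (hbc l hl).1))
    (fun l hl => (hderiv (n - 1) (by omega) _ hl
      ⟨hmono (by omega), by rw [Nat.sub_add_cancel hn]⟩).symm.trans
      (by rw [hxn]; exact (hbc l hl).2))
  have hconst : √(12 / h ^ 2) = 2 * √3 * h⁻¹ := by
    rw [Real.sqrt_div' _ (sq_nonneg h), Real.sqrt_sq hh.le,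
      show (12 : ℝ) = 2 ^ 2 * 3 by norm_num, Real.sqrt_mul' _ (by norm_num : (0 : ℝ) ≤ 3),
      Real.sqrt_sq (by norm_num), div_eq_mul_inv]
  rw [← hx0, ← hxn, L2_iteratedDeriv_eq_sqrt_brokenSeminormSq hmono hcell,
    L2_iteratedDeriv_eq_sqrt_brokenSeminormSq hmono hcell, ← hconst,
    ← Real.sqrt_mul (by positivity)]
  exact Real.sqrt_le_sqrt hestimate

/-- Theorem 6 of the paper: inverse inequality in higher Sobolev
semi-norms for the reduced spline space `S̃^{(q)}_{p,h}(a,b)`. -/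
theorem higher_sobolev_inverse_inequality (a b h : ℝ) (p q n : ℕ)
    (hab : a < b) (hp : 1 ≤ p) (hq : 1 ≤ q) (hqp : q ≤ p + 1)
    (hh : 0 < h) (hn : 0 < n) (hgrid : b - a = n * h)
    (u : ℝ → ℝ) (hu : IsReducedSplineQOn q p n h a b u) :
    L2 a b (iteratedDeriv q u) ≤ 2 * Real.sqrt 3 * h⁻¹ * L2 a b (iteratedDeriv (q - 1) u) :=
  higher_sobolev_inverse_inequality_general a b h p q n hq hqp hh hn hgrid u hu
end
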